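/- arXiv:1809.07689 — 6 statements merged into one kernel-verified Lean document; each statement's English description precedes it below -/
import Mathlib

section
/- The bound NEW-B-1(G) = len(Ĝ) + Σ_{s∈S} vol_s(G)/M_s is less than or equal to the bound OLD-B(G) = (1 − 1/max_{s∈S} M_s)·len(G) + Σ_{s∈S} vol_s(G)/M_s, for every typed DAG task G and every assignment of core counts M_s ≥ 1. -/
open MeasureTheory

namespace TypedSched

/-- A typed DAG task: directed edges `E`, type function `γ`, WCET function `c`,
and designated source and sink vertices. -/
structure TypedDAG (V S : Type) where
  E : V → V → Prop
  γ : V → S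
  c : V → ℝ
  src : V
  snk : V

variable {V S : Type}

/-- Strict ancestors of `v`. -/
def anc (G : TypedDAG V S) (v : V) : Set V := {u | Relation.TransGen G.E u v}

/-- Strict descendants of `v`. -/
def des (G : TypedDAG V S) (v : V) : Set V := {u | Relation.TransGen G.E v u}

/-- `par v`: vertices of the same type as `v` that are neither ancestors nor
descendants of `v` (and distinct from `v`). -/
def par (G : TypedDAG V S) (v : V) : Set V :=
  {u | u ≠ v ∧ G.γ u = G.γ v ∧ u ∉ anc G v ∧ u ∉ des G v}

def Acyclic (G : TypedDAG V S) : Prop := ∀ v, ¬ Relation.TransGen G.E v v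

def WeightsNonneg (G : TypedDAG V S) : Prop := ∀ v, 0 ≤ G.c v

def IsPath (G : TypedDAG V S) (π : List V) : Prop := π ≠ [] ∧ π.Chain' G.E

/-- A complete path goes from the source to the sink. -/
def IsCompletePath (G : TypedDAG V S) (π : List V) : Prop :=
  IsPath G π ∧ π.head? = some G.src ∧ π.getLast? = some G.snk

/-- Length of a path: total WCET of its vertices. -/
def len (G : TypedDAG V S) (π : List V) : ℝ := (π.map G.c).sum

/-- `len(G)`: length of the longest complete path. -/
noncomputable def lenG (G : TypedDAG V S) : ℝ :=
  sSup {x : ℝ | ∃ π : List V, IsCompletePath G π ∧ x = len G π}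

/-- The scaled graph `Ĝ` with `ĉ(v) = c(v)·(1 − 1/M_{γ(v)})`. -/
noncomputable def scaled (G : TypedDAG V S) (M : S → ℕ) : TypedDAG V S :=
  { G with c := fun v => G.c v * (1 - 1 / (M (G.γ v) : ℝ)) }

/-- `vol_s(G)`: total WCET of type-`s` vertices. -/
noncomputable def vol (G : TypedDAG V S) (s : S) : ℝ := ∑ᶠ v ∈ {v : V | G.γ v = s}, G.c v

/-- `ivs(π, s)`: interference set of the path `π` for type `s`. -/
def ivs (G : TypedDAG V S) (π : List V) (s : S) : Set V :=
  ⋃ τ ∈ {τ : V | τ ∈ π ∧ G.γ τ = s}, par G τ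

/-- Sum of WCETs of type-`s` vertices on a path. -/
def pathTypeSum [DecidableEq S] (G : TypedDAG V S) (π : List V) (s : S) : ℝ :=
  ((π.filter (fun v => decide (G.γ v = s))).map G.c).sum

/-- The NEW-B-1 bound. -/
noncomputable def newB1 [Fintype S] (G : TypedDAG V S) (M : S → ℕ) : ℝ :=
  lenG (scaled G M) + ∑ s : S, vol G s / (M s : ℝ)

/-- The OLD-B bound. -/
noncomputable def oldB [Fintype S] (G : TypedDAG V S) (M : S → ℕ) : ℝ :=
  (1 - 1 / ((Finset.univ.sup M : ℕ) : ℝ)) * lenG G + ∑ s : S, vol G s / (M s : ℝ)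

/-- Per-path bound `R̃(π)` used by NEW-B-2. -/
noncomputable def Rtilde [Fintype S] (G : TypedDAG V S) (M : S → ℕ) (π : List V) : ℝ :=
  len G π + ∑ s : S, (∑ᶠ v ∈ ivs G π s, G.c v) / (M s : ℝ)

/-- The NEW-B-2 bound. -/
noncomputable def newB2 [Fintype S] (G : TypedDAG V S) (M : S → ℕ) : ℝ :=
  sSup {x : ℝ | ∃ π : List V, IsCompletePath G π ∧ x = Rtilde G M π}

/-- An execution sequence of `G` under a work-conserving scheduler on a platform
with `M s` cores of each type `s`.  `exec v` is the set of time instants at which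
`v` executes, and `f v` is its finish time. -/
structure ExecSeq (G : TypedDAG V S) (M : S → ℕ) where
  exec : V → Set ℝ
  f : V → ℝ
  meas : ∀ v, MeasurableSet (exec v)
  /-- each vertex executes for at most its WCET -/
  dur_le : ∀ v, (volume (exec v)).toReal ≤ G.c v
  exec_nonneg : ∀ v, exec v ⊆ Set.Ici 0
  exec_lt_finish : ∀ v, exec v ⊆ Set.Iio (f v)
  f_nonneg : ∀ v, 0 ≤ f v
  /-- precedence: a vertex may execute only after all its predecessors finished -/
  prec : ∀ u v, G.E u v → exec v ⊆ Set.Ici (f u)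
  /-- at any instant at most `M s` vertices of type `s` are executing -/
  cores : ∀ (s : S) (t : ℝ), {v : V | G.γ v = s ∧ t ∈ exec v}.ncard ≤ M s
  /-- work conservation: if an eligible unfinished vertex does not execute at `t`,
  all cores of its type are busy -/
  work_conserving : ∀ (v : V) (t : ℝ), 0 ≤ t → t < f v →
    (∀ u, G.E u v → f u ≤ t) → t ∉ exec v →
    {u : V | G.γ u = G.γ v ∧ t ∈ exec u}.ncard = M (G.γ v)

/-- A critical path: a complete path on which each vertex is a
latest-finishing predecessor of the next one. -/
def IsCriticalPath (G : TypedDAG V S) {M : S → ℕ} (ex : ExecSeq G M) (π : List V) : Prop :=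
  IsCompletePath G π ∧
  ∀ p ∈ π.zip π.tail, ∀ w, G.E w p.2 → ex.f w ≤ ex.f p.1

/-- `X_s`: total time during which type-`s` critical-path vertices execute inside
their windows (the window of `τ_i` is `[f(τ_{i-1}), f(τ_i))`, with `f(τ_0) = 0`). -/
noncomputable def Xs [DecidableEq S] (G : TypedDAG V S) {M : S → ℕ} (ex : ExecSeq G M)
    (π : List V) (s : S) : ℝ :=
  ((π.zip ((0:ℝ) :: π.map ex.f)).map fun p =>
    if G.γ p.1 = s then (volume (ex.exec p.1 ∩ Set.Ico p.2 (ex.f p.1))).toReal else 0).sum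

/-- `Y_s`: total time during which type-`s` critical-path vertices are not executing
inside their windows. -/
noncomputable def Ys [DecidableEq S] (G : TypedDAG V S) {M : S → ℕ} (ex : ExecSeq G M)
    (π : List V) (s : S) : ℝ :=
  ((π.zip ((0:ℝ) :: π.map ex.f)).map fun p =>
    if G.γ p.1 = s then (volume ((Set.Ico p.2 (ex.f p.1)) \ ex.exec p.1)).toReal else 0).sum

theorem IsPath.nodup {G : TypedDAG V S} (hacyc : Acyclic G) {π : List V}
    (hπ : IsPath G π) : π.Nodup :=
  haveI : Std.Irrefl (Relation.TransGen G.E) := ⟨hacyc⟩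
  (List.isChain_iff_pairwise.mp (hπ.2.imp fun _ _ => Relation.TransGen.single)).nodup

theorem len_le_sum_univ [Fintype V] {G : TypedDAG V S} (hc : WeightsNonneg G) {π : List V}
    (hπ : π.Nodup) : len G π ≤ ∑ v, G.c v := by
  classical
  rw [len, ← List.sum_toFinset _ hπ]
  exact Finset.sum_le_univ_sum_of_nonneg hc

/-- Acyclicity makes complete paths simple, so `lenG` is a genuine maximum and not the junk
value of `sSup` on an unbounded set. -/
theorem bddAbove_len_completePath [Fintype V] {G : TypedDAG V S} (hc : WeightsNonneg G)
    (hacyc : Acyclic G) :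
    BddAbove {x : ℝ | ∃ π : List V, IsCompletePath G π ∧ x = len G π} := by
  refine ⟨∑ v, G.c v, ?_⟩
  rintro x ⟨π, hπ, rfl⟩
  exact len_le_sum_univ hc (hπ.1.nodup hacyc)

theorem lenG_nonneg {G : TypedDAG V S} (hc : WeightsNonneg G) : 0 ≤ lenG G := by
  refine Real.sSup_nonneg ?_
  rintro x ⟨π, -, rfl⟩
  exact List.sum_nonneg fun _ hx => by
    obtain ⟨v, -, rfl⟩ := List.mem_map.mp hx
    exact hc v

theorem len_scaled_le {G : TypedDAG V S} {M : S → ℕ} {n : ℕ} (hM : ∀ s, 1 ≤ M s)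
    (hMn : ∀ s, M s ≤ n) (hc : WeightsNonneg G) (π : List V) :
    len (scaled G M) π ≤ (1 - 1 / (n : ℝ)) * len G π := by
  rw [len, len, ← List.sum_map_mul_left]
  refine List.sum_le_sum fun v _ => ?_
  have hfactor : 1 - 1 / (M (G.γ v) : ℝ) ≤ 1 - 1 / (n : ℝ) :=
    sub_le_sub_left (one_div_le_one_div_of_le (by exact_mod_cast hM _)
      (by exact_mod_cast hMn _)) 1
  simpa only [scaled, mul_comm (G.c v)] using mul_le_mul_of_nonneg_left hfactor (hc v)

theorem lenG_scaled_le [Fintype V] [Fintype S] {G : TypedDAG V S} {M : S → ℕ}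
    (hM : ∀ s, 1 ≤ M s) (hc : WeightsNonneg G) (hacyc : Acyclic G) :
    lenG (scaled G M) ≤ (1 - 1 / ((Finset.univ.sup M : ℕ) : ℝ)) * lenG G := by
  have hfactor : 0 ≤ 1 - 1 / ((Finset.univ.sup M : ℕ) : ℝ) := by
    simpa only [one_div, sub_nonneg] using Nat.cast_inv_le_one _
  refine Real.sSup_le ?_ (mul_nonneg hfactor (lenG_nonneg hc))
  rintro x ⟨π, hπ, rfl⟩
  calc len (scaled G M) π
      ≤ (1 - 1 / ((Finset.univ.sup M : ℕ) : ℝ)) * len G π :=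
        len_scaled_le hM (fun _ => Finset.le_sup (Finset.mem_univ _)) hc π
    _ ≤ (1 - 1 / ((Finset.univ.sup M : ℕ) : ℝ)) * lenG G :=
        mul_le_mul_of_nonneg_left (le_csSup (bddAbove_len_completePath hc hacyc) ⟨π, hπ, rfl⟩)
          hfactor

theorem stmt3_general {V S : Type} [Fintype V] [Fintype S]
    (G : TypedDAG V S) (M : S → ℕ) (hM : ∀ s, 1 ≤ M s)
    (hc : WeightsNonneg G) (hacyc : Acyclic G) :
    newB1 G M ≤ oldB G M :=
  add_le_add_left (lenG_scaled_le hM hc hacyc) _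

/-- NEW-B-1 is always at most OLD-B. -/
theorem stmt3 {V S : Type} [Fintype V] [Fintype S] [Nonempty S]
    (G : TypedDAG V S) (M : S → ℕ) (hM : ∀ s, 1 ≤ M s)
    (hc : WeightsNonneg G) (hacyc : Acyclic G) :
    newB1 G M ≤ oldB G M :=
  stmt3_general G M hM hc hacyc

end TypedSched
end

section
/- In the 3-SAT reduction graph, for any complete backbone path π (one traversing v_0,…,v_n choosing the positive or negative path for each variable), the clause vertex u_r belongs to ivs(π, s_r) if and only if π contains at least one literal vertex of type s_r, i.e., if and only if clause C_r is satisfied by the truth assignment corresponding to π. -/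
open MeasureTheory

namespace TypedSched

variable {V S : Type}

/-! ### The 3-SAT reduction graph -/

/-- Vertices of the reduction graph: backbone vertices `v_0,…,v_n`, clause
vertices `u_r`, and literal-occurrence vertices (clause `r`, position `j`). -/
abbrev RV (n m : ℕ) := Fin (n+1) ⊕ (Fin m ⊕ (Fin m × Fin 3))

/-- A 3-SAT instance: `m` clauses over `n` variables, each clause being three
literals (a variable together with a polarity). -/
def Sat3 (n m : ℕ) (Cl : Fin m → Fin 3 → Fin n × Bool) : Prop :=
  ∃ a : Fin n → Bool, ∀ r : Fin m, ∃ j : Fin 3, (Cl r j).2 = a (Cl r j).1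

/-- Linear key used to order literal occurrences. -/
def key {m : ℕ} (p : Fin m × Fin 3) : ℕ := 3 * p.1.1 + p.2.1

/-- `p` is an occurrence of the literal `(i, b)`. -/
def isOcc {n m : ℕ} (Cl : Fin m → Fin 3 → Fin n × Bool) (i : Fin n) (b : Bool)
    (p : Fin m × Fin 3) : Prop := Cl p.1 p.2 = (i, b)

def noOcc {n m : ℕ} (Cl : Fin m → Fin 3 → Fin n × Bool) (i : Fin n) (b : Bool) : Prop :=
  ∀ p, ¬ isOcc Cl i b p

def firstOcc {n m : ℕ} (Cl : Fin m → Fin 3 → Fin n × Bool) (i : Fin n) (b : Bool)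
    (p : Fin m × Fin 3) : Prop :=
  isOcc Cl i b p ∧ ∀ q, isOcc Cl i b q → key p ≤ key q

def lastOcc {n m : ℕ} (Cl : Fin m → Fin 3 → Fin n × Bool) (i : Fin n) (b : Bool)
    (p : Fin m × Fin 3) : Prop :=
  isOcc Cl i b p ∧ ∀ q, isOcc Cl i b q → key q ≤ key p

def nextOcc {n m : ℕ} (Cl : Fin m → Fin 3 → Fin n × Bool) (i : Fin n) (b : Bool)
    (p q : Fin m × Fin 3) : Prop :=
  isOcc Cl i b p ∧ isOcc Cl i b q ∧ key p < key q ∧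
    ∀ r, isOcc Cl i b r → key r ≤ key p ∨ key q ≤ key r

/-- Edges of the reduction graph: clause vertices hang between `v_0` and `v_n`;
between `v_{i-1}` and `v_i` run the positive and the negative path, chaining the
occurrences of literal `x_i` resp. `x̄_i` (a direct edge if a literal has no
occurrence). -/
def redE {n m : ℕ} (Cl : Fin m → Fin 3 → Fin n × Bool) : RV n m → RV n m → Prop
  | Sum.inl a, Sum.inl b =>
      ∃ i : Fin n, a = i.castSucc ∧ b = i.succ ∧ (noOcc Cl i true ∨ noOcc Cl i false)
  | Sum.inl a, Sum.inr (Sum.inl _) => a = 0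
  | Sum.inr (Sum.inl _), Sum.inl b => b = Fin.last n
  | Sum.inl a, Sum.inr (Sum.inr p) =>
      ∃ (i : Fin n) (b' : Bool), a = i.castSucc ∧ firstOcc Cl i b' p
  | Sum.inr (Sum.inr p), Sum.inl b =>
      ∃ (i : Fin n) (b' : Bool), b = i.succ ∧ lastOcc Cl i b' p
  | Sum.inr (Sum.inr p), Sum.inr (Sum.inr q) =>
      ∃ (i : Fin n) (b' : Bool), nextOcc Cl i b' p q
  | _, _ => False

/-- Types: backbone vertices have type `s_0`; the clause vertex `u_r` and the
literal vertices of clause `r` have type `s_r` (index `r+1`). -/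
def redγ (n m : ℕ) : RV n m → Fin (m+1)
  | Sum.inl _ => 0
  | Sum.inr (Sum.inl r) => r.succ
  | Sum.inr (Sum.inr p) => p.1.succ

/-- Weights: backbone and clause vertices have WCET 1; literal vertices have
WCET `1/(mn+1)`. -/
noncomputable def redc (n m : ℕ) : RV n m → ℝ
  | Sum.inl _ => 1
  | Sum.inr (Sum.inl _) => 1
  | Sum.inr (Sum.inr _) => 1 / ((m : ℝ) * n + 1)

/-- The typed DAG constructed from a 3-SAT instance. -/
noncomputable def redGraph {n m : ℕ} (Cl : Fin m → Fin 3 → Fin n × Bool) :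
    TypedDAG (RV n m) (Fin (m+1)) :=
  { E := redE Cl
    γ := redγ n m
    c := redc n m
    src := Sum.inl 0
    snk := Sum.inl (Fin.last n) }

section Aux

variable {n m : ℕ} (Cl : Fin m → Fin 3 → Fin n × Bool)

lemma last_ne_castSucc (i : Fin n) : (Fin.last n) ≠ i.castSucc := by
  intro h
  have := congrArg Fin.val h
  simp [Fin.last] at this
  omega

lemma no_in_v0 (hn : 0 < n) : ∀ w : RV n m, ¬ redE Cl w (Sum.inl 0) := by
  rintro (x | r' | p) h
  · obtain ⟨i, _, h2, _⟩ := h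
    exact Fin.succ_ne_zero i h2.symm
  · simp only [redE] at h
    have := congrArg Fin.val h
    simp [Fin.last] at this
    omega
  · simp only [redE] at h
    obtain ⟨i, b', h1, _⟩ := h
    exact Fin.succ_ne_zero i h1.symm

lemma no_out_vlast (hn : 0 < n) : ∀ w : RV n m,
    ¬ redE Cl (Sum.inl (Fin.last n)) w := by
  rintro (x | r' | p) h
  · obtain ⟨i, h1, _⟩ := h
    exact last_ne_castSucc i h1
  · simp only [redE] at h
    have := congrArg Fin.val h
    simp [Fin.last] at this
    omega
  · simp only [redE] at h
    obtain ⟨i, b', h1, _⟩ := h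
    exact last_ne_castSucc i h1

lemma not_trans_to_v0 (hn : 0 < n) (w : RV n m) :
    ¬ Relation.TransGen (redE Cl) w (Sum.inl 0) := by
  intro h
  cases h with
  | single e => exact no_in_v0 Cl hn _ e
  | tail _ e => exact no_in_v0 Cl hn _ e

lemma trans_from_ur (hn : 0 < n) (r : Fin m) (w : RV n m)
    (h : Relation.TransGen (redE Cl) (Sum.inr (Sum.inl r)) w) :
    w = Sum.inl (Fin.last n) := by
  induction h with
  | single e =>
    rename_i b
    rcases b with x | r' | p
    · simp only [redE] at e
      exact congrArg Sum.inl e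
    · exact e.elim
    · exact e.elim
  | tail _ e ih =>
    rw [ih] at e
    exact (no_out_vlast Cl hn _ e).elim

lemma trans_to_ur (hn : 0 < n) (r : Fin m) (w : RV n m)
    (h : Relation.TransGen (redE Cl) w (Sum.inr (Sum.inl r))) :
    w = Sum.inl 0 := by
  cases h with
  | single e =>
    rcases w with x | r' | p
    · simp only [redE] at e
      exact congrArg Sum.inl e
    · exact e.elim
    · exact e.elim
  | tail h₁ e =>
    rename_i b
    have hb : b = Sum.inl 0 := by
      rcases b with x | r' | p
      · simp only [redE] at e
        exact congrArg Sum.inl e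
      · exact e.elim
      · exact e.elim
    rw [hb] at h₁
    exact (not_trans_to_v0 Cl hn _ h₁).elim

lemma ur_mem_par (hn : 0 < n) (r : Fin m) (p : Fin m × Fin 3) (hp : p.1 = r) :
    (Sum.inr (Sum.inl r) : RV n m) ∈ par (redGraph Cl) (Sum.inr (Sum.inr p)) := by
  refine ⟨by simp, by simp [redGraph, redγ, hp], ?_, ?_⟩
  · intro h
    have := trans_from_ur Cl hn r _ h
    simp at this
  · intro h
    have := trans_to_ur Cl hn r _ h
    simp at this

end Aux

/-- in the reduction graph, for a complete path `π` traversing the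
backbone and corresponding to the assignment `a`, the clause vertex `u_r` lies in
`ivs(π, s_r)` iff `π` contains a literal vertex of type `s_r`, iff clause `C_r`
is satisfied by `a`. -/
theorem stmt11 (n m : ℕ) (Cl : Fin m → Fin 3 → Fin n × Bool)
    (π : List (RV n m)) (a : Fin n → Bool)
    (hπ : IsCompletePath (redGraph Cl) π)
    (hbackbone : ∀ i : Fin (n+1), (Sum.inl i : RV n m) ∈ π)
    (hcorr : ∀ p : Fin m × Fin 3,
      (Sum.inr (Sum.inr p) : RV n m) ∈ π ↔ (Cl p.1 p.2).2 = a (Cl p.1 p.2).1)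
    (r : Fin m) :
    ((Sum.inr (Sum.inl r) : RV n m) ∈ ivs (redGraph Cl) π r.succ ↔
      ∃ p : Fin m × Fin 3, (Sum.inr (Sum.inr p) : RV n m) ∈ π ∧ p.1 = r) ∧
    ((Sum.inr (Sum.inl r) : RV n m) ∈ ivs (redGraph Cl) π r.succ ↔
      ∃ j : Fin 3, (Cl r j).2 = a (Cl r j).1) := by
  have hn : 0 < n := (Cl r 0).1.pos
  have h1 : (Sum.inr (Sum.inl r) : RV n m) ∈ ivs (redGraph Cl) π r.succ ↔
      ∃ p : Fin m × Fin 3, (Sum.inr (Sum.inr p) : RV n m) ∈ π ∧ p.1 = r := by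
    constructor
    · intro h
      simp only [ivs, Set.mem_iUnion, Set.mem_setOf_eq] at h
      obtain ⟨τ, ⟨hτπ, hτγ⟩, hpar⟩ := h
      rcases τ with x | r' | p
      · exact absurd hτγ.symm (Fin.succ_ne_zero r)
      · have : r' = r := by
          have := congrArg Fin.val hτγ
          simp [redGraph, redγ] at this
          exact Fin.ext this
        subst this
        exact absurd rfl hpar.1
      · refine ⟨p, hτπ, ?_⟩
        have := congrArg Fin.val hτγ
        simp [redGraph, redγ] at this
        exact Fin.ext this
    · rintro ⟨p, hpπ, hpr⟩
      simp only [ivs, Set.mem_iUnion, Set.mem_setOf_eq]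
      exact ⟨Sum.inr (Sum.inr p), ⟨hpπ, by simp [redGraph, redγ, hpr]⟩,
        ur_mem_par Cl hn r p hpr⟩
  refine ⟨h1, h1.trans ?_⟩
  constructor
  · rintro ⟨p, hpπ, hpr⟩
    exact ⟨p.2, by rw [← hpr]; exact (hcorr p).mp hpπ⟩
  · rintro ⟨j, hj⟩
    exact ⟨(r, j), (hcorr (r, j)).mpr hj, rfl⟩

end TypedSched
end

section
/- In the 3-SAT reduction graph with all M_s = 1, the 3-SAT instance is satisfiable if and only if max_{π∈G} R̃(π) > m + n + 1, where R̃(π) = len(π) + Σ_s Σ_{v∈ivs(π,s)} c(v). -/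
open MeasureTheory

/-!
Every complete path of the reduction graph either consists of `v_0`, one clause vertex `u_r` and
`v_n`, or runs along the backbone and follows, between `v_i` and `v_{i+1}`, the occurrences of one
of the literals `x_i`, `¬x_i`. In the first case `R̃ ≤ 3 + 3/(mn+1) ≤ 4`. In the second, the only
vertex parallel to a literal vertex of clause `r` is `u_r` (the other literals of the clause are on
other variables, hence comparable), so the interference term counts the clauses hit by the path,
while its length lies strictly between `n + 1` and `n + 2`. Hence `R̃ > m + n + 1` exactly when the
path hits every clause, i.e. when the assignment it encodes satisfies the formula. Conversely every
assignment is realised by a path: list the backbone vertices and the occurrences of the true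
literals in a topological order; consecutive ones are then joined by an edge.
-/

theorem exists_list_pairwise_lt_of_injective {α β : Type*} [Finite α] [LinearOrder β]
    {f : α → β} (hf : Function.Injective f) (P : α → Prop) :
    ∃ l : List α, l.Pairwise (fun a b => f a < f b) ∧ ∀ x, x ∈ l ↔ P x := by
  classical
  have := Fintype.ofFinite α
  refine ⟨(Finset.univ.filter P).toList.mergeSort (fun a b => f a ≤ f b), ?_, by simp⟩
  have hnd := (List.mergeSort_perm _ (fun a b => decide (f a ≤ f b))).nodup_iff.2
    (Finset.nodup_toList (Finset.univ.filter P))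
  refine ((List.pairwise_mergeSort ?_ ?_ _).and hnd).imp fun ⟨hle, hne⟩ =>
    lt_of_le_of_ne (by simpa using hle) (hf.ne hne)
  · simpa using fun _ _ _ => le_trans
  · simpa using fun a b => le_total (f a) (f b)

namespace List

variable {α β : Type*} [LinearOrder β] {f : α → β} {l : List α} {a : α}

theorem Pairwise.isChain_nothing_between (h : l.Pairwise (fun a b => f a < f b)) :
    l.IsChain (fun a b => f a < f b ∧ ∀ c ∈ l, f c ≤ f a ∨ f b ≤ f c) := by
  induction l with
  | nil => exact .nil
  | cons a t ih =>
    obtain ⟨ha, ht⟩ := pairwise_cons.1 h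
    have htail := IsChain.iff_mem.1 (ih ht)
    cases t with
    | nil => exact .singleton a
    | cons b t' =>
      refine .cons_cons ⟨ha b mem_cons_self, ?_⟩ (htail.imp ?_)
      · intro c hc
        rcases mem_cons.1 hc with rfl | hc
        · exact Or.inl le_rfl
        rcases mem_cons.1 hc with rfl | hc
        · exact Or.inr le_rfl
        · exact Or.inr ((pairwise_cons.1 ht).1 c hc).le
      · rintro x y ⟨hx, -, hxy, hgap⟩
        refine ⟨hxy, fun c hc => ?_⟩
        rcases mem_cons.1 hc with rfl | hc
        · exact Or.inl (ha x hx).le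
        · exact hgap c hc

theorem Pairwise.head?_eq_of_forall_le (h : l.Pairwise (fun a b => f a < f b)) (ha : a ∈ l)
    (hmin : ∀ x ∈ l, f a ≤ f x) : l.head? = some a := by
  cases l with
  | nil => simp at ha
  | cons b t =>
    rcases mem_cons.1 ha with rfl | ht
    · rfl
    · exact absurd (hmin b mem_cons_self) (not_le.2 ((pairwise_cons.1 h).1 a ht))

theorem Pairwise.getLast?_eq_of_forall_le (h : l.Pairwise (fun a b => f a < f b)) (ha : a ∈ l)
    (hmax : ∀ x ∈ l, f x ≤ f a) : l.getLast? = some a := by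
  rcases eq_nil_or_concat' l with rfl | ⟨t, b, rfl⟩
  · simp at ha
  · rcases mem_append.1 ha with ht | hb
    · exact absurd (hmax b (by simp))
        (not_le.2 ((pairwise_append.1 h).2.2 a ht b mem_cons_self))
    · simp_all

end List

namespace TypedSched

variable {V S : Type} {G : TypedDAG V S} {π : List V}

theorem pairwise_transGen_of_isChain (hπ : π.IsChain G.E) :
    π.Pairwise (Relation.TransGen G.E) :=
  List.isChain_iff_pairwise.1 (hπ.imp fun _ _ => .single)

theorem transGen_or_of_mem_chain (hπ : π.IsChain G.E) {x y : V} (hx : x ∈ π) (hy : y ∈ π)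
    (hne : x ≠ y) : Relation.TransGen G.E x y ∨ Relation.TransGen G.E y x := by
  have : Std.Symm fun a b => Relation.TransGen G.E a b ∨ Relation.TransGen G.E b a :=
    ⟨fun _ _ h => h.symm⟩
  have hcmp : π.Pairwise fun a b => Relation.TransGen G.E a b ∨ Relation.TransGen G.E b a :=
    (pairwise_transGen_of_isChain hπ).imp Or.inl
  exact hcmp.forall hx hy hne

theorem notMem_par_of_mem_chain (hπ : π.IsChain G.E) {x y : V} (hx : x ∈ π) (hy : y ∈ π) :
    y ∉ par G x := fun ⟨hne, _, hanc, hdes⟩ =>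
  (transGen_or_of_mem_chain hπ hy hx hne).elim hanc hdes

theorem type_eq_of_mem_ivs {s : S} {v : V} (hv : v ∈ ivs G π s) : G.γ v = s := by
  obtain ⟨τ, ⟨-, rfl⟩, -, hγ, -⟩ := Set.mem_iUnion₂.1 hv
  exact hγ

theorem nodup_of_isChain (hG : Acyclic G) (hπ : π.IsChain G.E) : π.Nodup := by
  refine (pairwise_transGen_of_isChain hπ).imp ?_
  rintro a _ h rfl
  exact hG a h

theorem len_eq_sum_indicator [Fintype V] (hnd : π.Nodup) :
    len G π = ∑ v, {v | v ∈ π}.indicator G.c v := by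
  classical
  simp only [Set.indicator_apply, Set.mem_ofPred_eq]
  rw [len, ← List.sum_toFinset _ hnd, ← Finset.sum_filter]
  congr 1
  ext; simp

theorem Rtilde_one [Fintype S] (π : List V) :
    Rtilde G (fun _ => 1) π = len G π + ∑ s, ∑ᶠ v ∈ ivs G π s, G.c v := by
  simp [Rtilde]

theorem Rtilde_le_newB2 [Fintype V] [Fintype S] (hG : Acyclic G) (hπ : IsCompletePath G π)
    (M : S → ℕ) : Rtilde G M π ≤ newB2 G M := by
  refine le_csSup (((List.finite_length_le V (Fintype.card V)).image (Rtilde G M)).bddAbove.mono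
    ?_) ⟨π, hπ, rfl⟩
  rintro _ ⟨π', hπ', rfl⟩
  exact ⟨π', (nodup_of_isChain hG hπ'.1.2).length_le_card, rfl⟩

theorem exists_Rtilde_gt_of_lt_newB2 [Fintype S] {M : S → ℕ} {x : ℝ} (hx : 0 ≤ x)
    (h : x < newB2 G M) : ∃ π, IsCompletePath G π ∧ x < Rtilde G M π := by
  by_contra! hle
  exact h.not_ge (Real.sSup_le (by rintro _ ⟨π, hπ, rfl⟩; exact hle π hπ) hx)

theorem par_subset_ivs {τ : V} (hτ : τ ∈ π) : par G τ ⊆ ivs G π (G.γ τ) :=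
  Set.subset_biUnion_of_mem (u := par G) (show τ ∈ {τ | τ ∈ π ∧ G.γ τ = G.γ τ} from ⟨hτ, rfl⟩)

section Reduction

variable {n m : ℕ} (Cl : Fin m → Fin 3 → Fin n × Bool)

theorem key_lt (p : Fin m × Fin 3) : key p < 3 * m := by
  have := p.1.2; have := p.2.2; simp only [key]; omega

theorem key_injective : Function.Injective (key (m := m)) := by
  intro p q h
  have := p.1.2; have := p.2.2; have := q.1.2; have := q.2.2
  simp only [key] at h
  exact Prod.ext (Fin.ext (by omega)) (Fin.ext (by omega))

/-- A topological order of the reduction graph: the occurrences of variable `i` sit between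
`v_i` and `v_{i+1}`, ordered by `key`, and the clause vertices between `v_0` and `v_1`. -/
def rank : RV n m → ℕ ×ₗ ℕ
  | .inl j => toLex (j, 0)
  | .inr (.inl r) => toLex (0, 3 * m + 1 + r)
  | .inr (.inr p) => toLex ((Cl p.1 p.2).1, key p + 1)

theorem rank_injective : Function.Injective (rank Cl) := by
  rintro (j | r | p) (k | r' | q) h <;>
    simp only [rank, toLex_inj, Prod.mk.injEq, Fin.val_inj] at h
  · rw [h.1]
  · omega
  · omega
  · omega
  · rw [Fin.ext (by omega : (r : ℕ) = r')]
  · have := key_lt q; omega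
  · omega
  · have := key_lt p; omega
  · rw [key_injective (by omega : key p = key q)]

theorem rank_lt_of_redE (hn : 1 ≤ n) {x y : RV n m} (h : redE Cl x y) :
    rank Cl x < rank Cl y := by
  rcases x with j | r | p <;> rcases y with k | r' | q <;>
    simp only [redE, firstOcc, lastOcc, nextOcc, isOcc] at h <;>
    simp only [rank, Prod.Lex.toLex_lt_toLex]
  · obtain ⟨i, rfl, rfl, -⟩ := h
    simp
  · simp [h]
  · obtain ⟨i, b, rfl, hq, -⟩ := h
    simp [hq]
  · simp [h]
    omega
  · obtain ⟨i, b, rfl, hp, -⟩ := h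
    simp [hp]
  · obtain ⟨i, b, hp, hq, hpq, -⟩ := h
    simp [hp, hq, hpq]

theorem rank_lt_of_transGen (hn : 1 ≤ n) {x y : RV n m}
    (h : Relation.TransGen (redE Cl) x y) : rank Cl x < rank Cl y := by
  induction h with
  | single h => exact rank_lt_of_redE Cl hn h
  | tail _ h ih => exact ih.trans (rank_lt_of_redE Cl hn h)

theorem acyclic_redGraph (hn : 1 ≤ n) : Acyclic (redGraph Cl) :=
  fun _ h => (rank_lt_of_transGen Cl hn h).false

theorem rank_source_le (x : RV n m) : rank Cl (.inl 0) ≤ rank Cl x := by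
  rcases x with j | r | p <;> simp only [rank, Prod.Lex.toLex_le_toLex, Fin.val_zero,
    true_and] <;> omega

theorem rank_le_sink (hn : 1 ≤ n) (x : RV n m) : rank Cl x ≤ rank Cl (.inl (Fin.last n)) := by
  rcases x with j | r | p <;> simp only [rank, Prod.Lex.toLex_le_toLex, Fin.val_last] <;> omega

def OnPath (a : Fin n → Bool) : RV n m → Prop
  | .inl _ => True
  | .inr (.inl _) => False
  | .inr (.inr p) => (Cl p.1 p.2).2 = a (Cl p.1 p.2).1

def NothingBetween (a : Fin n → Bool) (x y : RV n m) : Prop :=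
  ∀ z, OnPath Cl a z → rank Cl z ≤ rank Cl x ∨ rank Cl y ≤ rank Cl z

section NothingBetween

variable {Cl} {a : Fin n → Bool}

theorem NothingBetween.occ {x y : RV n m} (h : NothingBetween Cl a x y) {i : Fin n}
    {q : Fin m × Fin 3} (hq : isOcc Cl i (a i) q) :
    rank Cl (.inr (.inr q)) ≤ rank Cl x ∨ rank Cl y ≤ rank Cl (.inr (.inr q)) :=
  h _ (by simp only [OnPath, show Cl q.1 q.2 = (i, a i) from hq])

theorem redE_backbone_of_nothingBetween {j k : Fin (n + 1)} (hjk : (j : ℕ) < k)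
    (h : NothingBetween Cl a (.inl j) (.inl k)) : redE Cl (.inl j) (.inl k) := by
  have hk : (k : ℕ) = j + 1 := by
    have := h (.inl ⟨j + 1, by omega⟩) trivial
    simp only [rank, Prod.Lex.toLex_le_toLex] at this
    omega
  set i : Fin n := ⟨j, by omega⟩
  refine ⟨i, rfl, Fin.ext (by simp [i, hk]), ?_⟩
  have hno : noOcc Cl i (a i) := fun q hq => by
    have := h.occ hq
    simp only [rank, show Cl q.1 q.2 = (i, a i) from hq, Prod.Lex.toLex_le_toLex] at this
    simp [i] at this
    omega
  cases ha : a i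
  · exact Or.inr (ha ▸ hno)
  · exact Or.inl (ha ▸ hno)

theorem redE_first_of_nothingBetween {j : Fin (n + 1)} {q : Fin m × Fin 3}
    (hq : OnPath Cl a (.inr (.inr q))) (hjq : (j : ℕ) ≤ (Cl q.1 q.2).1)
    (h : NothingBetween Cl a (.inl j) (.inr (.inr q))) : redE Cl (.inl j) (.inr (.inr q)) := by
  set i := (Cl q.1 q.2).1
  have hj : (j : ℕ) = i := by
    have := h (.inl i.castSucc) trivial
    simp only [rank, Prod.Lex.toLex_le_toLex, Fin.val_castSucc] at this
    omega
  refine ⟨i, a i, Fin.ext hj, Prod.ext rfl hq, fun q' hq' => ?_⟩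
  have := h.occ hq'
  simp only [rank, show Cl q'.1 q'.2 = (i, a i) from hq', Prod.Lex.toLex_le_toLex] at this
  omega

theorem redE_last_of_nothingBetween {p : Fin m × Fin 3} {k : Fin (n + 1)}
    (hp : OnPath Cl a (.inr (.inr p))) (hpk : ((Cl p.1 p.2).1 : ℕ) < k)
    (h : NothingBetween Cl a (.inr (.inr p)) (.inl k)) : redE Cl (.inr (.inr p)) (.inl k) := by
  set i := (Cl p.1 p.2).1
  have hk : (k : ℕ) = i + 1 := by
    have := h (.inl i.succ) trivial
    simp only [rank, Prod.Lex.toLex_le_toLex, Fin.val_succ] at this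
    omega
  refine ⟨i, a i, Fin.ext (by simp [hk]), Prod.ext rfl hp, fun q hq => ?_⟩
  have := h.occ hq
  simp only [rank, show Cl q.1 q.2 = (i, a i) from hq, Prod.Lex.toLex_le_toLex] at this
  omega

theorem redE_next_of_nothingBetween {p q : Fin m × Fin 3} (hp : OnPath Cl a (.inr (.inr p)))
    (hq : OnPath Cl a (.inr (.inr q))) (hpq : rank Cl (.inr (.inr p)) < rank Cl (.inr (.inr q)))
    (h : NothingBetween Cl a (.inr (.inr p)) (.inr (.inr q))) :
    redE Cl (.inr (.inr p)) (.inr (.inr q)) := by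
  set i := (Cl p.1 p.2).1
  simp only [rank, Prod.Lex.toLex_lt_toLex] at hpq
  have hvar : (Cl q.1 q.2).1 = i := by
    have := h (.inl i.succ) trivial
    simp only [rank, Prod.Lex.toLex_le_toLex, Fin.val_succ] at this
    exact Fin.ext (by omega)
  refine ⟨i, a i, Prod.ext rfl hp, Prod.ext hvar (by rw [← hvar]; exact hq), by omega,
    fun r hr => ?_⟩
  have := h.occ hr
  simp only [rank, show Cl r.1 r.2 = (i, a i) from hr, hvar, Prod.Lex.toLex_le_toLex] at this
  omega

theorem redE_of_nothingBetween {x y : RV n m} (hx : OnPath Cl a x) (hy : OnPath Cl a y)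
    (hxy : rank Cl x < rank Cl y) (h : NothingBetween Cl a x y) : redE Cl x y := by
  rcases x with j | r | p <;> rcases y with k | r' | q <;> simp only [OnPath] at hx hy
  all_goals have hlex := hxy; simp only [rank, Prod.Lex.toLex_lt_toLex] at hlex
  · exact redE_backbone_of_nothingBetween (by omega) h
  · exact redE_first_of_nothingBetween hy (by omega) h
  · exact redE_last_of_nothingBetween hx (by omega) h
  · exact redE_next_of_nothingBetween hx hy hxy h

end NothingBetween

theorem exists_completePath (hn : 1 ≤ n) (a : Fin n → Bool) :
    ∃ π : List (RV n m), IsCompletePath (redGraph Cl) π ∧ ∀ x, x ∈ π ↔ OnPath Cl a x := by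
  obtain ⟨π, hsort, hmem⟩ :=
    exists_list_pairwise_lt_of_injective (rank_injective Cl) (OnPath Cl a)
  have h0 : Sum.inl 0 ∈ π := (hmem _).2 trivial
  refine ⟨π, ⟨⟨List.ne_nil_of_mem h0, ?_⟩, ?_, ?_⟩, hmem⟩
  · exact (List.IsChain.iff_mem.1 hsort.isChain_nothing_between).imp
      fun x y ⟨hx, hy, hxy, hgap⟩ => redE_of_nothingBetween ((hmem x).1 hx)
        ((hmem y).1 hy) hxy fun z hz => hgap z ((hmem z).2 hz)
  · exact hsort.head?_eq_of_forall_le h0 fun x _ => rank_source_le Cl x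
  · exact hsort.getLast?_eq_of_forall_le ((hmem _).2 trivial) fun x _ => rank_le_sink Cl hn x

theorem eq_source_of_transGen_clause (hn : 1 ≤ n) {x : RV n m} {r : Fin m}
    (h : Relation.TransGen (redE Cl) x (.inr (.inl r))) : x = .inl 0 := by
  obtain ⟨b, hxb, hb⟩ := Relation.TransGen.tail'_iff.1 h
  obtain rfl : b = .inl 0 := by
    rcases b with j | r' | p <;> simp only [redE] at hb
    rw [hb]
  rcases Relation.reflTransGen_iff_eq_or_transGen.1 hxb with h | h
  · exact h.symm
  · exact absurd (rank_source_le Cl x) (not_le.2 (rank_lt_of_transGen Cl hn h))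

theorem eq_sink_of_transGen_clause (hn : 1 ≤ n) {x : RV n m} {r : Fin m}
    (h : Relation.TransGen (redE Cl) (.inr (.inl r)) x) : x = .inl (Fin.last n) := by
  obtain ⟨b, hb, hbx⟩ := Relation.TransGen.head'_iff.1 h
  obtain rfl : b = .inl (Fin.last n) := by
    rcases b with j | r' | p <;> simp only [redE] at hb
    rw [hb]
  rcases Relation.reflTransGen_iff_eq_or_transGen.1 hbx with h | h
  · exact h
  · exact absurd (rank_le_sink Cl hn x) (not_le.2 (rank_lt_of_transGen Cl hn h))

theorem clause_mem_par_lit (hn : 1 ≤ n) (p : Fin m × Fin 3) :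
    .inr (.inl p.1) ∈ par (redGraph Cl) (.inr (.inr p)) :=
  ⟨by simp, rfl, fun h => by simpa using eq_sink_of_transGen_clause Cl hn h,
    fun h => by simpa using eq_source_of_transGen_clause Cl hn h⟩

theorem lit_mem_par_clause (hn : 1 ≤ n) (p : Fin m × Fin 3) :
    .inr (.inr p) ∈ par (redGraph Cl) (.inr (.inl p.1)) :=
  ⟨by simp, rfl, fun h => by simpa using eq_source_of_transGen_clause Cl hn h,
    fun h => by simpa using eq_sink_of_transGen_clause Cl hn h⟩

theorem par_backbone (hn : 1 ≤ n) (j : Fin (n + 1)) : par (redGraph Cl) (.inl j) = ∅ := by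
  obtain ⟨π, hπ, hmem⟩ := exists_completePath Cl hn (fun _ => true)
  refine Set.eq_empty_of_forall_notMem fun u hu => ?_
  rcases u with k | r | p
  · exact notMem_par_of_mem_chain hπ.1.2 ((hmem (.inl j)).2 trivial) ((hmem (.inl k)).2 trivial) hu
  · exact Fin.succ_ne_zero r hu.2.1
  · exact Fin.succ_ne_zero p.1 hu.2.1

theorem par_lit (hn : 1 ≤ n)
    (hdist : ∀ (r : Fin m) (j j' : Fin 3), j ≠ j' → (Cl r j).1 ≠ (Cl r j').1)
    (p : Fin m × Fin 3) : par (redGraph Cl) (.inr (.inr p)) = {.inr (.inl p.1)} := by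
  refine Set.Subset.antisymm (fun u hu => ?_)
    (Set.singleton_subset_iff.2 (clause_mem_par_lit Cl hn p))
  rcases u with k | r | q
  · exact absurd hu.2.1 (Fin.succ_ne_zero p.1).symm
  · rw [Fin.succ_inj.1 hu.2.1]
    rfl
  · have hq1 : q.1 = p.1 := Fin.succ_inj.1 hu.2.1
    have hvar : (Cl q.1 q.2).1 ≠ (Cl p.1 p.2).1 :=
      hq1 ▸ hdist _ _ _ fun h => hu.1 (by rw [Prod.ext hq1 h])
    -- an assignment making both literals true puts both on one path, so they are comparable
    obtain ⟨π, hπ, hmem⟩ := exists_completePath Cl hn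
      (Function.update (fun _ => (Cl p.1 p.2).2) (Cl q.1 q.2).1 (Cl q.1 q.2).2)
    exact absurd hu (notMem_par_of_mem_chain hπ.1.2
      ((hmem _).2 (by simp [OnPath, Function.update_of_ne hvar.symm]))
      ((hmem _).2 (by simp [OnPath])))

theorem par_clause (hn : 1 ≤ n) (r : Fin m) :
    par (redGraph Cl) (.inr (.inl r)) = Set.range fun j => .inr (.inr (r, j)) := by
  refine Set.Subset.antisymm (fun u hu => ?_) (Set.range_subset_iff.2 fun j =>
    lit_mem_par_clause Cl hn (r, j))
  rcases u with k | r' | q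
  · exact absurd hu.2.1 (Fin.succ_ne_zero r).symm
  · exact absurd (by rw [Fin.succ_inj.1 hu.2.1]) hu.1
  · exact ⟨q.2, by rw [← Fin.succ_inj.1 hu.2.1]⟩

theorem ivs_zero (hn : 1 ≤ n) (π : List (RV n m)) : ivs (redGraph Cl) π 0 = ∅ :=
  Set.eq_empty_of_forall_notMem fun v hv => by
    obtain ⟨τ, ⟨-, hτ⟩, hv⟩ := Set.mem_iUnion₂.1 hv
    rcases τ with j | r | p
    · rwa [par_backbone Cl hn] at hv
    · exact Fin.succ_ne_zero r hτ
    · exact Fin.succ_ne_zero p.1 hτ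

open Classical in
theorem finsum_ivs_succ_of_no_clause (hn : 1 ≤ n)
    (hdist : ∀ (r : Fin m) (j j' : Fin 3), j ≠ j' → (Cl r j).1 ≠ (Cl r j').1)
    {π : List (RV n m)} (hno : ∀ r, .inr (.inl r) ∉ π) (r : Fin m) :
    ∑ᶠ v ∈ ivs (redGraph Cl) π r.succ, (redGraph Cl).c v =
      if ∃ j, .inr (.inr (r, j)) ∈ π then 1 else 0 := by
  have hsub : ivs (redGraph Cl) π r.succ ⊆
      {v | v = .inr (.inl r) ∧ ∃ j, .inr (.inr (r, j)) ∈ π} := by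
    intro v hv
    obtain ⟨τ, ⟨hτπ, hτ⟩, hvτ⟩ := Set.mem_iUnion₂.1 hv
    rcases τ with j | r' | p
    · exact absurd hτ (Fin.succ_ne_zero r).symm
    · exact absurd hτπ (hno r')
    · obtain rfl : p.1 = r := Fin.succ_inj.1 hτ
      rw [par_lit Cl hn hdist] at hvτ
      exact ⟨hvτ, p.2, hτπ⟩
  split_ifs with h
  · obtain ⟨j, hj⟩ := h
    have : ivs (redGraph Cl) π r.succ = {.inr (.inl r)} :=
      Set.Subset.antisymm (fun v hv => (hsub hv).1)
        (Set.singleton_subset_iff.2 (par_subset_ivs hj (clause_mem_par_lit Cl hn (r, j))))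
    rw [this, finsum_mem_singleton]
    rfl
  · rw [Set.eq_empty_of_forall_notMem fun v hv => h (hsub hv).2, finsum_mem_empty]

open Classical in
noncomputable def hitClauses (π : List (RV n m)) : Finset (Fin m) :=
  Finset.univ.filter fun r => ∃ j, .inr (.inr (r, j)) ∈ π

theorem mem_hitClauses {π : List (RV n m)} {r : Fin m} :
    r ∈ hitClauses π ↔ ∃ j, .inr (.inr (r, j)) ∈ π := by
  simp [hitClauses]

theorem interference_of_no_clause (hn : 1 ≤ n)
    (hdist : ∀ (r : Fin m) (j j' : Fin 3), j ≠ j' → (Cl r j).1 ≠ (Cl r j').1)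
    {π : List (RV n m)} (hno : ∀ r, .inr (.inl r) ∉ π) :
    ∑ s, ∑ᶠ v ∈ ivs (redGraph Cl) π s, (redGraph Cl).c v = (hitClauses π).card := by
  rw [hitClauses, Fin.sum_univ_succ, ivs_zero Cl hn, finsum_mem_empty, zero_add, ← Finset.sum_boole]
  exact Finset.sum_congr rfl fun r _ => finsum_ivs_succ_of_no_clause Cl hn hdist hno r

theorem mem_of_clause_mem (hn : 1 ≤ n) {π : List (RV n m)} (hπ : π.IsChain (redE Cl))
    {r : Fin m} (hr : .inr (.inl r) ∈ π) {x : RV n m} (hx : x ∈ π) :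
    x = .inl 0 ∨ x = .inr (.inl r) ∨ x = .inl (Fin.last n) := by
  by_cases hxr : x = .inr (.inl r)
  · exact Or.inr (Or.inl hxr)
  rcases transGen_or_of_mem_chain (G := redGraph Cl) hπ hx hr hxr with h | h
  · exact Or.inl (eq_source_of_transGen_clause Cl hn h)
  · exact Or.inr (Or.inr (eq_sink_of_transGen_clause Cl hn h))

theorem interference_of_clause_mem (hn : 1 ≤ n) {π : List (RV n m)}
    (hπ : π.IsChain (redE Cl)) {r : Fin m} (hr : .inr (.inl r) ∈ π) :
    ∑ s, ∑ᶠ v ∈ ivs (redGraph Cl) π s, (redGraph Cl).c v = 3 / ((m : ℝ) * n + 1) := by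
  have hsub : ∀ s, ivs (redGraph Cl) π s ⊆ par (redGraph Cl) (.inr (.inl r)) := by
    intro s v hv
    obtain ⟨τ, ⟨hτπ, -⟩, hv⟩ := Set.mem_iUnion₂.1 hv
    rcases mem_of_clause_mem Cl hn hπ hr hτπ with rfl | rfl | rfl
    · rw [par_backbone Cl hn] at hv
      exact hv.elim
    · exact hv
    · rw [par_backbone Cl hn] at hv
      exact hv.elim
  rw [Finset.sum_eq_single r.succ]
  · have hpar : par (redGraph Cl) (.inr (.inl r)) ⊆ ivs (redGraph Cl) π r.succ :=
      par_subset_ivs hr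
    rw [Set.Subset.antisymm (hsub _) hpar, par_clause Cl hn,
      finsum_mem_range fun j j' h => by simpa using h, finsum_eq_sum_of_fintype]
    simp [redGraph, redc]
    ring
  · intro s _ hs
    rw [Set.eq_empty_of_forall_notMem fun v hv =>
      hs ((type_eq_of_mem_ivs hv).symm.trans (hsub s hv).2.1), finsum_mem_empty]
  · simp

theorem redc_nonneg (v : RV n m) : 0 ≤ redc n m v := by
  rcases v with j | r | p <;> simp only [redc] <;> positivity

theorem redc_le_one (v : RV n m) : redc n m v ≤ 1 := by
  rcases v with j | r | p <;> simp only [redc, le_refl]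
  exact div_le_one_of_le₀ (le_add_of_nonneg_left (by positivity)) (by positivity)

theorem len_lt_of_no_clause (hn : 3 ≤ n) {π : List (RV n m)} (hπ : π.IsChain (redE Cl))
    (hno : ∀ r, .inr (.inl r) ∉ π) : len (redGraph Cl) π < n + 2 := by
  rw [len_eq_sum_indicator (nodup_of_isChain (acyclic_redGraph Cl (by omega)) hπ),
    Fintype.sum_sum_type, Fintype.sum_sum_type]
  have hbb : ∑ j : Fin (n + 1), {v | v ∈ π}.indicator (redGraph Cl).c (.inl j) ≤
      ∑ _j : Fin (n + 1), (1 : ℝ) :=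
    Finset.sum_le_sum fun _ _ => Set.indicator_apply_le' (fun _ => le_rfl) fun _ => zero_le_one
  have hcl : ∑ r : Fin m, {v | v ∈ π}.indicator (redGraph Cl).c (.inr (.inl r)) = 0 :=
    Finset.sum_eq_zero fun r _ => Set.indicator_of_notMem (s := {v | v ∈ π}) (hno r) _
  have hlit : ∑ p : Fin m × Fin 3, {v | v ∈ π}.indicator (redGraph Cl).c (.inr (.inr p)) ≤
      ∑ _p : Fin m × Fin 3, 1 / ((m : ℝ) * n + 1) :=
    Finset.sum_le_sum fun p _ =>
      Set.indicator_apply_le' (fun _ => le_rfl) fun _ => redc_nonneg (.inr (.inr p))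
  have hsum_bb : ∑ _j : Fin (n + 1), (1 : ℝ) = n + 1 := by simp
  have hsum_lit : ∑ _p : Fin m × Fin 3, 1 / ((m : ℝ) * n + 1) = 3 * m / (m * n + 1) := by
    simp
    ring
  have hw : 3 * m / ((m : ℝ) * n + 1) < 1 := by
    rw [div_lt_one (by positivity)]
    linarith [mul_le_mul_of_nonneg_left (by exact_mod_cast hn : (3 : ℝ) ≤ n) m.cast_nonneg]
  linarith

theorem len_gt_of_backbone_mem (hn : 1 ≤ n) {π : List (RV n m)} (hπ : π.IsChain (redE Cl))
    (hbb : ∀ j, .inl j ∈ π) {p : Fin m × Fin 3} (hp : .inr (.inr p) ∈ π) :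
    n + 1 < len (redGraph Cl) π := by
  rw [len_eq_sum_indicator (nodup_of_isChain (acyclic_redGraph Cl hn) hπ),
    Fintype.sum_sum_type, Fintype.sum_sum_type]
  have hbb' : ∑ j : Fin (n + 1), {v | v ∈ π}.indicator (redGraph Cl).c (.inl j) = n + 1 := by
    simp [Set.indicator_of_mem (s := {v | v ∈ π}) (hbb _), redGraph, redc]
  have hcl : 0 ≤ ∑ r : Fin m, {v | v ∈ π}.indicator (redGraph Cl).c (.inr (.inl r)) :=
    Finset.sum_nonneg fun r _ => Set.indicator_nonneg (fun v _ => redc_nonneg v) _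
  have hlit : 0 < ∑ q : Fin m × Fin 3, {v | v ∈ π}.indicator (redGraph Cl).c (.inr (.inr q)) :=
    Finset.sum_pos' (fun q _ => Set.indicator_nonneg (fun v _ => redc_nonneg v) _)
      ⟨p, Finset.mem_univ p, by
        rw [Set.indicator_of_mem (s := {v | v ∈ π}) hp]
        exact div_pos one_pos (by positivity)⟩
  linarith

theorem len_le_three_of_clause_mem (hn : 1 ≤ n) {π : List (RV n m)}
    (hπ : π.IsChain (redE Cl)) {r : Fin m} (hr : .inr (.inl r) ∈ π) :
    len (redGraph Cl) π ≤ 3 := by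
  have hsub : π ⊆ [.inl 0, .inr (.inl r), .inl (Fin.last n)] := fun x hx => by
    simpa using mem_of_clause_mem Cl hn hπ hr hx
  have hlen : π.length ≤ 3 :=
    ((nodup_of_isChain (acyclic_redGraph Cl hn) hπ).subperm hsub).length_le
  calc len (redGraph Cl) π ≤ (π.map (redGraph Cl).c).length • (1 : ℝ) :=
        List.sum_le_card_nsmul _ _ fun x hx => by
          obtain ⟨v, -, rfl⟩ := List.mem_map.1 hx
          exact redc_le_one v
    _ ≤ 3 := by simpa using (by exact_mod_cast hlen : (π.length : ℝ) ≤ 3)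

theorem Rtilde_le_four_of_clause_mem (hm : 1 ≤ m) (hn : 3 ≤ n) {π : List (RV n m)}
    (hπ : π.IsChain (redE Cl)) {r : Fin m} (hr : .inr (.inl r) ∈ π) :
    Rtilde (redGraph Cl) (fun _ => 1) π ≤ 4 := by
  rw [Rtilde_one, interference_of_clause_mem Cl (by omega) hπ hr]
  have hlen := len_le_three_of_clause_mem Cl (by omega) hπ hr
  have hw : 3 / ((m : ℝ) * n + 1) ≤ 1 := by
    rw [div_le_one (by positivity)]
    linarith [mul_le_mul (by exact_mod_cast hm : (1 : ℝ) ≤ m) (by exact_mod_cast hn : (3 : ℝ) ≤ n)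
      zero_le_three m.cast_nonneg]
  linarith

theorem redE_lit_cases {p : Fin m × Fin 3} {y : RV n m} (h : redE Cl (.inr (.inr p)) y) :
    (∃ q, y = .inr (.inr q) ∧ Cl q.1 q.2 = Cl p.1 p.2) ∨ y = .inl (Cl p.1 p.2).1.succ := by
  rcases y with k | r | q <;> simp only [redE, lastOcc, nextOcc, isOcc] at h
  · obtain ⟨i, b, rfl, hp, -⟩ := h
    simp [hp]
  · obtain ⟨i, b, hp, hq, -⟩ := h
    exact Or.inl ⟨q, rfl, hq.trans hp.symm⟩

theorem literal_eq_of_transGen (hn : 1 ≤ n) {p q : Fin m × Fin 3}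
    (h : Relation.TransGen (redE Cl) (.inr (.inr p)) (.inr (.inr q)))
    (hvar : (Cl q.1 q.2).1 = (Cl p.1 p.2).1) : Cl q.1 q.2 = Cl p.1 p.2 := by
  -- everything reachable from an occurrence of a literal is an occurrence of the same literal,
  -- or lies beyond the backbone vertex closing that variable's segment
  suffices ∀ y, Relation.TransGen (redE Cl) (.inr (.inr p)) y →
      (∃ q', y = .inr (.inr q') ∧ Cl q'.1 q'.2 = Cl p.1 p.2) ∨
        rank Cl (.inl (Cl p.1 p.2).1.succ) ≤ rank Cl y by
    rcases this _ h with ⟨q', hq', hcl⟩ | hle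
    · cases hq'
      exact hcl
    · simp only [rank, Prod.Lex.toLex_le_toLex, hvar, Fin.val_succ] at hle
      omega
  intro y hy
  induction hy with
  | single e => exact (redE_lit_cases Cl e).imp_right fun h => (congrArg _ h.symm).le
  | tail _ e ih =>
    rcases ih with ⟨q', rfl, hq'⟩ | hle
    · rcases redE_lit_cases Cl e with h | rfl
      · exact Or.inl (h.imp fun _ => And.imp_right (·.trans hq'))
      · exact Or.inr (by rw [hq'])
    · exact Or.inr (hle.trans (rank_lt_of_redE Cl hn e).le)

theorem literal_eq_of_mem_chain (hn : 1 ≤ n) {π : List (RV n m)} (hπ : π.IsChain (redE Cl))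
    {p q : Fin m × Fin 3} (hp : .inr (.inr p) ∈ π) (hq : .inr (.inr q) ∈ π)
    (hvar : (Cl p.1 p.2).1 = (Cl q.1 q.2).1) : Cl p.1 p.2 = Cl q.1 q.2 := by
  by_cases hpq : p = q
  · rw [hpq]
  rcases transGen_or_of_mem_chain (G := redGraph Cl) hπ hp hq (by simpa using hpq) with h | h
  · exact (literal_eq_of_transGen Cl hn h hvar.symm).symm
  · exact literal_eq_of_transGen Cl hn h hvar

theorem sat3_of_consistent (P : Fin m × Fin 3 → Prop)
    (hcons : ∀ p q, P p → P q → (Cl p.1 p.2).1 = (Cl q.1 q.2).1 → Cl p.1 p.2 = Cl q.1 q.2)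
    (hhit : ∀ r, ∃ j, P (r, j)) : Sat3 n m Cl := by
  classical
  refine ⟨fun i => decide (∃ p, P p ∧ Cl p.1 p.2 = (i, true)), fun r => ?_⟩
  obtain ⟨j, hj⟩ := hhit r
  refine ⟨j, ?_⟩
  cases hb : (Cl r j).2
  · refine (decide_eq_false fun ⟨p, hp, hcl⟩ => ?_).symm
    have := congrArg Prod.snd (hcons _ _ hj hp (by rw [hcl]))
    rw [hcl, hb] at this
    exact Bool.false_ne_true this
  · exact (decide_eq_true ⟨(r, j), hj, Prod.ext rfl hb⟩).symm

theorem three_le_of_distinct_vars (hm : 1 ≤ m)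
    (hdist : ∀ (r : Fin m) (j j' : Fin 3), j ≠ j' → (Cl r j).1 ≠ (Cl r j').1) : 3 ≤ n := by
  simpa using Fintype.card_le_of_injective (fun j => (Cl ⟨0, hm⟩ j).1)
    fun j j' h => by_contra fun hne => hdist _ j j' hne h

theorem Rtilde_gt_of_satisfying (hm : 1 ≤ m) (hn : 1 ≤ n)
    (hdist : ∀ (r : Fin m) (j j' : Fin 3), j ≠ j' → (Cl r j).1 ≠ (Cl r j').1)
    {a : Fin n → Bool} (ha : ∀ r, ∃ j, (Cl r j).2 = a (Cl r j).1) {π : List (RV n m)}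
    (hπ : π.IsChain (redE Cl)) (hmem : ∀ x, x ∈ π ↔ OnPath Cl a x) :
    m + n + 1 < Rtilde (redGraph Cl) (fun _ => 1) π := by
  have hhit : ∀ r, ∃ j, .inr (.inr (r, j)) ∈ π := fun r =>
    (ha r).imp fun j hj => (hmem _).2 hj
  rw [Rtilde_one, interference_of_no_clause Cl hn hdist fun r h => (hmem _).1 h,
    Finset.eq_univ_of_forall fun r => mem_hitClauses.2 (hhit r), Finset.card_univ,
    Fintype.card_fin]
  obtain ⟨j, hj⟩ := hhit ⟨0, hm⟩
  linarith [len_gt_of_backbone_mem Cl hn hπ (fun j => (hmem _).2 trivial) hj]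

theorem sat3_of_Rtilde_gt (hn : 3 ≤ n)
    (hdist : ∀ (r : Fin m) (j j' : Fin 3), j ≠ j' → (Cl r j).1 ≠ (Cl r j').1)
    {π : List (RV n m)} (hπ : π.IsChain (redE Cl)) (hno : ∀ r, .inr (.inl r) ∉ π)
    (h : m + n + 1 < Rtilde (redGraph Cl) (fun _ => 1) π) : Sat3 n m Cl := by
  have hlen := len_lt_of_no_clause Cl hn hπ hno
  rw [Rtilde_one, interference_of_no_clause Cl (by omega) hdist hno] at h
  -- the length stays below `n + 2`, so all `m` clauses must be hit
  have hall : hitClauses π = Finset.univ := by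
    refine Finset.eq_univ_of_card _ ((Finset.card_le_univ _).antisymm ?_)
    have : (m : ℝ) < (hitClauses π).card + 1 := by linarith
    have : m < (hitClauses π).card + 1 := by exact_mod_cast this
    simpa using this
  exact sat3_of_consistent Cl (fun p => .inr (.inr p) ∈ π)
    (fun p q hp hq => literal_eq_of_mem_chain Cl (by omega) hπ hp hq)
    fun r => mem_hitClauses.1 (hall ▸ Finset.mem_univ r)

end Reduction

/-- with one core of every type, the 3-SAT instance is satisfiable
iff `max_π R̃(π) > m + n + 1` on the reduction graph. -/
theorem stmt12 (n m : ℕ) (hm : 1 ≤ m)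
    (Cl : Fin m → Fin 3 → Fin n × Bool)
    (hdist : ∀ (r : Fin m) (j j' : Fin 3), j ≠ j' → (Cl r j).1 ≠ (Cl r j').1) :
    Sat3 n m Cl ↔ ((m : ℝ) + n + 1 < newB2 (redGraph Cl) (fun _ => 1)) := by
  have hn := three_le_of_distinct_vars Cl hm hdist
  constructor
  · rintro ⟨a, ha⟩
    obtain ⟨π, hπ, hmem⟩ := exists_completePath Cl (by omega) a
    exact (Rtilde_gt_of_satisfying Cl hm (by omega) hdist ha hπ.1.2 hmem).trans_le
      (Rtilde_le_newB2 (acyclic_redGraph Cl (by omega)) hπ _)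
  · intro h
    obtain ⟨π, hπ, hlt⟩ := exists_Rtilde_gt_of_lt_newB2 (by positivity) h
    by_cases hcl : ∃ r, .inr (.inl r) ∈ π
    · obtain ⟨r, hr⟩ := hcl
      have h4 := Rtilde_le_four_of_clause_mem Cl hm hn hπ.1.2 hr
      have : (3 : ℝ) ≤ n := by exact_mod_cast hn
      have : (1 : ℝ) ≤ m := by exact_mod_cast hm
      exfalso
      linarith
    · exact sat3_of_Rtilde_gt Cl hn hdist hπ.1.2 (not_exists.1 hcl) hlt

end TypedSched
end

section
/- Let u precede w on a directed path in a DAG with γ(u) = γ(w) = γ(v) = s. If v ∈ par(w), v ∉ par(u), and there exists an earlier type-s path-vertex u' (an ancestor of u) with v ∈ par(u'), then a contradiction arises; equivalently: for any three type-s vertices τ^s_j, τ^s_{i-1}, τ^s_i appearing in this order on a path, the sets par(τ^s_i) \ par(τ^s_{i-1}) and par(τ^s_j) \ par(τ^s_{j-1}) are disjoint. -/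
open MeasureTheory

namespace TypedSched

variable {V S : Type}

/-- if `a`, `b`, `d` are type-`s` vertices appearing in this order
along a path (so `a` is an ancestor of `b` and `b` of `d`), then any `v` with
`v ∈ par(d)` and `v ∈ par(a)` also satisfies `v ∈ par(b)`; hence the telescoping
difference sets `par(d) \ par(b)` and `par(a) \ par(p)` (for an even earlier
type-`s` path vertex `p`) are disjoint. -/
theorem stmt14 {V S : Type} (G : TypedDAG V S) (a b d : V)
    (hab : b ∈ des G a) (hbd : d ∈ des G b)
    (hga : G.γ a = G.γ d) (hgb : G.γ b = G.γ d) :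
    (∀ v, v ∈ par G d → v ∈ par G a → v ∈ par G b) ∧
    (∀ p : V, a ∈ des G p → G.γ p = G.γ d →
      Disjoint (par G d \ par G b) (par G a \ par G p)) := by
  have key : ∀ v, v ∈ par G d → v ∈ par G a → v ∈ par G b := by
    intro v ⟨hvd, hgvd, hvad, hvdd⟩ ⟨hva, hgva, hvaa, hvda⟩
    refine ⟨?_, hgvd.trans hgb.symm, ?_, ?_⟩
    · rintro rfl; exact hvad hbd
    · intro h; exact hvad (h.trans hbd)
    · intro h; exact hvda (hab.trans h)
  refine ⟨key, fun p _ _ => ?_⟩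
  rw [Set.disjoint_left]
  rintro v ⟨hvd, hvb⟩ ⟨hva, _⟩
  exact hvb (key v hvd hva)

end TypedSched
end

section
/- The domination relation on path-abstraction tuples is preserved under path extension: if tuples ⟨u, Δ_1, R_1⟩ and ⟨u, Δ_2, R_2⟩ at vertex u satisfy ⟨u, Δ_1, R_1⟩ ≽ ⟨u, Δ_2, R_2⟩, and both are extended to a common successor v of u (producing ⟨v, Δ'_1, R'_1⟩ and ⟨v, Δ'_2, R'_2⟩ by the update rules), then ⟨v, Δ'_1, R'_1⟩ ≽ ⟨v, Δ'_2, R'_2⟩. -/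
open MeasureTheory

namespace TypedSched

variable {V S : Type}

/-! ### Tuple abstraction and domination -/

def parOpt (G : TypedDAG V S) : Option V → Set V
  | none => ∅
  | some x => par G x

def desOpt (G : TypedDAG V S) : Option V → Set V
  | none => ∅
  | some x => des G x

/-- Domination between two abstraction tuples at the same vertex. -/
def Dom (G : TypedDAG V S) (Δ₁ Δ₂ : S → Option V) (R₁ R₂ : ℝ) : Prop :=
  R₂ ≤ R₁ ∧ ∀ s : S, Δ₁ s = none ∨
    (Δ₁ s ≠ none ∧ Δ₂ s ≠ none ∧ parOpt G (Δ₁ s) ∩ desOpt G (Δ₂ s) = ∅)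

/-- Update rule for `Δ` when extending a path to the vertex `v`. -/
def updDelta [DecidableEq S] (G : TypedDAG V S) (v : V) (Δ : S → Option V) :
    S → Option V :=
  fun s => if s = G.γ v then some v else Δ s

/-- Update rule for `R` when extending a path to the vertex `v`:
`R' = R + c(v) + Σ_{w ∈ par(v) \ par(δ(u, γ(v)))} c(w)/M_{γ(v)}`. -/
noncomputable def updR (G : TypedDAG V S) (M : S → ℕ) (v : V) (Δ : S → Option V)
    (R : ℝ) : ℝ :=
  R + G.c v + ∑ᶠ w ∈ (par G v \ parOpt G (Δ (G.γ v))), G.c w / (M (G.γ v) : ℝ)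

/-!
Extending to `v` sets the `γ v`-entry of both tuples to `v`, and `par v ∩ des v = ∅`, so
condition (2) holds for that type and is inherited for all others.  For `R`, let `δ₂` be the
`γ v`-entry of the dominated tuple: it is a same-type ancestor of `v`, and domination says no
vertex of `par δ₁` lies below it.  Hence a vertex of `par v ∩ par δ₁` is also in `par δ₂`,
i.e. `par v \ par δ₂ ⊆ par v \ par δ₁`, and the dominating tuple's increment is the larger.
-/

lemma finsum_mem_le_finsum_mem_of_subset {α M : Type*} [AddCommMonoid M] [PartialOrder M]
    [IsOrderedAddMonoid M] {f : α → M} {s t : Set α} (ht : t.Finite) (hst : s ⊆ t)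
    (hf : ∀ x ∈ t, 0 ≤ f x) : ∑ᶠ x ∈ s, f x ≤ ∑ᶠ x ∈ t, f x :=
  calc ∑ᶠ x ∈ s, f x = ∑ᶠ x ∈ t ∩ s, f x := by rw [Set.inter_eq_right.mpr hst]
    _ ≤ (∑ᶠ x ∈ t ∩ s, f x) + ∑ᶠ x ∈ t \ s, f x :=
      le_add_of_nonneg_right (finsum_nonneg fun x => finsum_nonneg fun hx => hf x hx.1)
    _ = ∑ᶠ x ∈ t, f x := finsum_mem_inter_add_sdiff s ht

lemma par_inter_des_self (G : TypedDAG V S) (v : V) : par G v ∩ des G v = ∅ :=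
  Set.eq_empty_iff_forall_notMem.mpr fun _ hw => hw.1.2.2.2 hw.2

lemma mem_anc_of_eq_or_mem_anc {G : TypedDAG V S} {u v x : V} (huv : G.E u v)
    (hx : x = u ∨ x ∈ anc G u) : x ∈ anc G v := by
  rcases hx with rfl | hx
  · exact Relation.TransGen.single huv
  · exact hx.tail huv

lemma mem_par_of_mem_anc {G : TypedDAG V S} {v x w : V} (hx : x ∈ anc G v)
    (hγ : G.γ x = G.γ v) (hw : w ∈ par G v) (hwx : w ∉ des G x) : w ∈ par G x := by
  obtain ⟨-, hwγ, hwanc, -⟩ := hw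
  refine ⟨?_, hwγ.trans hγ.symm, fun hwx' => hwanc (hwx'.trans hx), hwx⟩
  rintro rfl
  exact hwanc hx

lemma par_sdiff_parOpt_subset {G : TypedDAG V S} {v : V} {δ₁ δ₂ : Option V}
    (hδ₂ : ∀ x, δ₂ = some x → G.γ x = G.γ v ∧ x ∈ anc G v)
    (hdom : δ₁ = none ∨ (δ₁ ≠ none ∧ δ₂ ≠ none ∧ parOpt G δ₁ ∩ desOpt G δ₂ = ∅)) :
    par G v \ parOpt G δ₂ ⊆ par G v \ parOpt G δ₁ := by
  rcases hdom with rfl | ⟨-, hδ₂ne, hdisj⟩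
  · simp only [parOpt, Set.sdiff_empty]
    exact Set.sdiff_subset
  obtain ⟨x, rfl⟩ := Option.ne_none_iff_exists'.mp hδ₂ne
  obtain ⟨hγ, hx⟩ := hδ₂ x rfl
  rintro w ⟨hw, hwx⟩
  refine ⟨hw, fun hw₁ => hwx (mem_par_of_mem_anc hx hγ hw fun hwdes => ?_)⟩
  exact (Set.eq_empty_iff_forall_notMem.mp hdisj) w ⟨hw₁, hwdes⟩

lemma updR_le_updR [Finite V] {G : TypedDAG V S} (M : S → ℕ) (hc : WeightsNonneg G) (v : V)
    {Δ₁ Δ₂ : S → Option V} {R₁ R₂ : ℝ} (hR : R₂ ≤ R₁)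
    (hsub : par G v \ parOpt G (Δ₂ (G.γ v)) ⊆ par G v \ parOpt G (Δ₁ (G.γ v))) :
    updR G M v Δ₂ R₂ ≤ updR G M v Δ₁ R₁ := by
  unfold updR
  gcongr
  exact finsum_mem_le_finsum_mem_of_subset (Set.toFinite _) hsub
    fun w _ => div_nonneg (hc w) (Nat.cast_nonneg _)

theorem stmt15_general {V S : Type} [Fintype V] [DecidableEq S]
    (G : TypedDAG V S) (M : S → ℕ)
    (hc : WeightsNonneg G)
    (u v : V) (huv : G.E u v)
    (Δ₁ Δ₂ : S → Option V) (R₁ R₂ : ℝ)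
    (hΔ₂ : ∀ s x, Δ₂ s = some x → G.γ x = s ∧ (x = u ∨ x ∈ anc G u))
    (hdom : Dom G Δ₁ Δ₂ R₁ R₂) :
    Dom G (updDelta G v Δ₁) (updDelta G v Δ₂)
      (updR G M v Δ₁ R₁) (updR G M v Δ₂ R₂) := by
  obtain ⟨hR, hs⟩ := hdom
  have hΔ₂v : ∀ x, Δ₂ (G.γ v) = some x → G.γ x = G.γ v ∧ x ∈ anc G v := fun x hx =>
    ⟨(hΔ₂ _ x hx).1, mem_anc_of_eq_or_mem_anc huv (hΔ₂ _ x hx).2⟩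
  refine ⟨updR_le_updR M hc v hR (par_sdiff_parOpt_subset hΔ₂v (hs _)), fun s => ?_⟩
  by_cases h : s = G.γ v
  · simp only [updDelta, if_pos h]
    exact Or.inr ⟨Option.some_ne_none _, Option.some_ne_none _, par_inter_des_self G v⟩
  · simpa only [updDelta, if_neg h] using hs s

/-- domination between tuples is preserved when both are extended
to a common successor `v` of `u`. -/
theorem stmt15 {V S : Type} [Fintype V] [DecidableEq S]
    (G : TypedDAG V S) (M : S → ℕ) (hM : ∀ s, 1 ≤ M s)
    (hc : WeightsNonneg G)
    (u v : V) (huv : G.E u v)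
    (Δ₁ Δ₂ : S → Option V) (R₁ R₂ : ℝ)
    (hΔ₁ : ∀ s x, Δ₁ s = some x → G.γ x = s ∧ (x = u ∨ x ∈ anc G u))
    (hΔ₂ : ∀ s x, Δ₂ s = some x → G.γ x = s ∧ (x = u ∨ x ∈ anc G u))
    (hdom : Dom G Δ₁ Δ₂ R₁ R₂) :
    Dom G (updDelta G v Δ₁) (updDelta G v Δ₂)
      (updR G M v Δ₁ R₁) (updR G M v Δ₂ R₂) :=
  stmt15_general G M hc u v huv Δ₁ Δ₂ R₁ R₂ hΔ₂ hdom

end TypedSched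
end

section
/- The number of distinct abstraction tuples ⟨v, Δ, R⟩ that the width-first search algorithm ever stores is at most O(|V|^{|S|+1}), and the total number of tuples generated is O(|V|^{|S|+2}); hence computing NEW-B-2 takes polynomial time when the number of types |S| is a constant. -/
open MeasureTheory

namespace TypedSched

variable {V S : Type}

/-- any set of abstraction tuples `⟨v, Δ, R⟩` keeping a single `R`
per pair `(v, Δ)` has at most `|V|·(|V|+1)^{|S|}` elements, and any set of tuples
generated by extending each stored tuple to (at most) every vertex has at most
`|V|·(|V|+1)^{|S|}·|V|` elements — polynomial in `|V|` for constant `|S|`. -/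
theorem stmt19 {V S : Type} [Fintype V] [Fintype S]
    (T : Set (V × (S → Option V) × ℝ))
    (hT : ∀ a ∈ T, ∀ b ∈ T, a.1 = b.1 → a.2.1 = b.2.1 → a = b)
    (Gen : Set (V × (S → Option V) × ℝ))
    (g : (V × (S → Option V) × ℝ) × V → V × (S → Option V) × ℝ)
    (hGen : Gen ⊆ g '' (T ×ˢ (Set.univ : Set V))) :
    T.ncard ≤ Fintype.card V * (Fintype.card V + 1) ^ Fintype.card S ∧
    Gen.ncard ≤ Fintype.card V * (Fintype.card V + 1) ^ Fintype.card S
      * Fintype.card V := by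

  classical
  set f : (V × (S → Option V) × ℝ) → V × (S → Option V) := fun a => (a.1, a.2.1) with hf
  have hinj : Set.InjOn f T := by
    intro a ha b hb hab
    rw [Prod.ext_iff] at hab
    exact hT a ha b hb hab.1 hab.2
  have himg : (f '' T).ncard ≤ Fintype.card V * (Fintype.card V + 1) ^ Fintype.card S := by
    have h1 : (f '' T).ncard ≤ (Set.univ : Set (V × (S → Option V))).ncard :=
      Set.ncard_le_ncard (Set.subset_univ _) Set.finite_univ
    simpa [Set.ncard_univ, Nat.card_eq_fintype_card, Fintype.card_prod, Fintype.card_fun,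
      Fintype.card_option, mul_comm] using h1
  have hTfin : T.Finite :=
    Set.Finite.of_finite_image (Set.finite_univ.subset (Set.subset_univ _)) hinj
  have hTcard : T.ncard ≤ Fintype.card V * (Fintype.card V + 1) ^ Fintype.card S := by
    rwa [Set.ncard_image_of_injOn hinj] at himg
  refine ⟨hTcard, ?_⟩
  have hprodfin : (T ×ˢ (Set.univ : Set V)).Finite := hTfin.prod Set.finite_univ
  have h2 : Gen.ncard ≤ (g '' (T ×ˢ (Set.univ : Set V))).ncard :=
    Set.ncard_le_ncard hGen (hprodfin.image g)
  have h3 : (g '' (T ×ˢ (Set.univ : Set V))).ncard ≤ (T ×ˢ (Set.univ : Set V)).ncard :=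
    Set.ncard_image_le hprodfin
  have h4 : (T ×ˢ (Set.univ : Set V)).ncard = T.ncard * Fintype.card V := by
    calc (T ×ˢ (Set.univ : Set V)).ncard
        = Nat.card (↥T × ↥(Set.univ : Set V)) := by
          rw [← Nat.card_coe_set_eq]; exact Nat.card_congr (Equiv.Set.prod _ _)
      _ = T.ncard * Fintype.card V := by
          rw [Nat.card_prod, Nat.card_coe_set_eq, Nat.card_coe_set_eq,
            Set.ncard_univ, Nat.card_eq_fintype_card]
  have := h2.trans (h3.trans_eq h4)
  exact this.trans (Nat.mul_le_mul_right _ hTcard)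

end TypedSched
end
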